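/- The minimum weight of a perfect matching on the odd-degree vertices X₁ of a minimum spanning tree is at most half the minimum Hamiltonian cycle weight of the whole graph, when edge weights satisfy the triangle inequality. -/

import Mathlib

open scoped Classical

/-- Cyclic weight of a closed tour given by the vertex list `l`:
the sum of `ρ` over consecutive pairs, including the pair closing the cycle. -/
def cycWeight {V : Type*} (ρ : V → V → ℝ) (l : List V) : ℝ :=
  ((l.zip (l.rotate 1)).map fun p => ρ p.1 p.2).sum

/-- The (cyclic) list of edges of a closed tour given by the vertex list `l`. -/
def cycEdges {V : Type*} (l : List V) : List (Sym2 V) :=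
  (l.zip (l.rotate 1)).map (fun p => Sym2.mk p.1 p.2)

/-- The list of endpoints of a list of matching pairs. -/
def matchVerts {V : Type*} (M : List (V × V)) : List V :=
  M.flatMap fun p => [p.1, p.2]

/-- `M` is a perfect matching on the vertex set `X`: a partition of `X` into pairs. -/
def IsPM {V : Type*} [DecidableEq V] (X : Finset V) (M : List (V × V)) : Prop :=
  (matchVerts M).Nodup ∧ (matchVerts M).toFinset = X

/-- The weight of a matching: the sum of weights of its pairs. -/
def mWeight {V : Type*} (ρ : V → V → ℝ) (M : List (V × V)) : ℝ :=
  (M.map fun p => ρ p.1 p.2).sum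

/-- Total edge weight of a graph. -/
noncomputable def gWeight {V : Type*} [Fintype V] (f : Sym2 V → ℝ) (T : SimpleGraph V) : ℝ :=
  ∑ e ∈ T.edgeSet.toFinset, f e

/-- The weight of a walk in the graph `G` with edge weights `f`
(edges are counted with multiplicity). -/
def walkWeight {V : Type*} (G : SimpleGraph V) (f : Sym2 V → ℝ) {u v : V} (p : G.Walk u v) : ℝ :=
  (p.edges.map f).sum

/-- Shortest-path distance between `i` and `j` (metric closure of `G`). -/
noncomputable def sdist {V : Type*} (G : SimpleGraph V) (f : Sym2 V → ℝ) (i j : V) : ℝ :=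
  sInf {x | ∃ p : G.Walk i j, x = walkWeight G f p}

/-!
Shortcutting a Hamiltonian tour `L₀` to the odd-degree vertices `X₁` gives, by the triangle
inequality, a tour on `X₁` of weight at most that of `L₀`. By the handshake lemma `X₁` has
even size, so the edges of this tour alternate between two perfect matchings of `X₁`; the
lighter one weighs at most half the tour.
-/

def chainWeight {V : Type*} (ρ : V → V → ℝ) (l : List V) : ℝ :=
  ((l.zip l.tail).map fun p => ρ p.1 p.2).sum

def toPairs {V : Type*} : List V → List (V × V)
  | a :: b :: t => (a, b) :: toPairs t
  | _ => []

section Weights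

variable {V : Type*} (ρ : V → V → ℝ)

@[simp] lemma chainWeight_singleton (a : V) : chainWeight ρ [a] = 0 := by
  simp [chainWeight]

@[simp] lemma chainWeight_cons_cons (a b : V) (t : List V) :
    chainWeight ρ (a :: b :: t) = ρ a b + chainWeight ρ (b :: t) := by
  simp [chainWeight]

@[simp] lemma mWeight_nil : mWeight ρ ([] : List (V × V)) = 0 := by
  simp [mWeight]

@[simp] lemma mWeight_cons (p : V × V) (M : List (V × V)) :
    mWeight ρ (p :: M) = ρ p.1 p.2 + mWeight ρ M := by
  simp [mWeight]

@[simp] lemma toPairs_nil : toPairs ([] : List V) = [] := rfl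

@[simp] lemma toPairs_cons_cons (a b : V) (t : List V) :
    toPairs (a :: b :: t) = (a, b) :: toPairs t := rfl

lemma cycWeight_cons (a : V) (t : List V) :
    cycWeight ρ (a :: t) = chainWeight ρ (a :: t ++ [a]) := by
  have hzip : (a :: t ++ [a]).zip (a :: t ++ [a]).tail = (a :: t).zip (t ++ [a]) := by
    have htail : (a :: t ++ [a]).tail = t ++ [a] ++ [] := by simp
    rw [htail, List.zip_append (by simp)]
    simp
  rw [cycWeight, chainWeight, hzip, List.rotate_cons_succ, List.rotate_zero]

lemma chainWeight_append_cons (l₁ : List V) (a : V) (l₂ : List V) :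
    chainWeight ρ (l₁ ++ a :: l₂) = chainWeight ρ (l₁ ++ [a]) + chainWeight ρ (a :: l₂) := by
  induction l₁ with
  | nil => simp
  | cons b l₁ ih =>
    cases l₁ with
    | nil => simp
    | cons c l₁ =>
      simp only [List.cons_append, chainWeight_cons_cons] at ih ⊢
      rw [ih, add_assoc]

lemma cycWeight_rotate_one (l : List V) : cycWeight ρ (l.rotate 1) = cycWeight ρ l := by
  rcases l with _ | ⟨a, _ | ⟨b, t⟩⟩
  · rfl
  · simp
  · have hsplit : b :: t ++ [a] ++ [b] = b :: t ++ a :: [b] := by simp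
    rw [List.rotate_cons_succ, List.rotate_zero, List.cons_append, cycWeight_cons, cycWeight_cons,
      ← List.cons_append, hsplit, chainWeight_append_cons, List.cons_append (a := a),
      chainWeight_cons_cons]
    simp [add_comm]

lemma cycWeight_rotate (l : List V) (n : ℕ) : cycWeight ρ (l.rotate n) = cycWeight ρ l := by
  induction n with
  | zero => rw [List.rotate_zero]
  | succ n ih => rw [← List.rotate_rotate, cycWeight_rotate_one, ih]

lemma cycWeight_append_comm (l₁ l₂ : List V) :
    cycWeight ρ (l₁ ++ l₂) = cycWeight ρ (l₂ ++ l₁) := by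
  rw [← List.rotate_append_length_eq, cycWeight_rotate]

end Weights

section TriangleInequality

variable {V : Type*} {ρ : V → V → ℝ} (hnn : ∀ i j, 0 ≤ ρ i j)
  (htri : ∀ i j k, ρ i j ≤ ρ i k + ρ k j)
include hnn

lemma mWeight_nonneg (M : List (V × V)) : 0 ≤ mWeight ρ M :=
  List.sum_nonneg (by simp only [List.mem_map]; rintro _ ⟨p, -, rfl⟩; exact hnn _ _)

lemma cycWeight_nonneg (l : List V) : 0 ≤ cycWeight ρ l :=
  List.sum_nonneg (by simp only [List.mem_map]; rintro _ ⟨p, -, rfl⟩; exact hnn _ _)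

include htri

lemma chainWeight_cons_le (a b : V) (t : List V) :
    chainWeight ρ (a :: t) ≤ ρ a b + chainWeight ρ (b :: t) := by
  cases t with
  | nil => simpa using hnn a b
  | cons c t =>
    rw [chainWeight_cons_cons, chainWeight_cons_cons, ← add_assoc]
    exact add_le_add_left (htri a c b) _

lemma chainWeight_cons_filter_le (p : V → Bool) (a : V) (t : List V) :
    chainWeight ρ (a :: t.filter p) ≤ chainWeight ρ (a :: t) := by
  induction t generalizing a with
  | nil => rfl
  | cons b t ih =>
    by_cases hb : p b
    · rw [List.filter_cons_of_pos hb, chainWeight_cons_cons, chainWeight_cons_cons]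
      exact add_le_add_right (ih b) _
    · rw [List.filter_cons_of_neg hb, chainWeight_cons_cons]
      exact (ih a).trans (chainWeight_cons_le hnn htri a b t)

lemma cycWeight_filter_le (p : V → Bool) (l : List V) :
    cycWeight ρ (l.filter p) ≤ cycWeight ρ l := by
  by_cases h : ∃ a ∈ l, p a
  · obtain ⟨a, ha, hpa⟩ := h
    obtain ⟨l₁, l₂, rfl⟩ := List.append_of_mem ha
    -- rotate both tours so that they start at the kept vertex `a`
    calc cycWeight ρ ((l₁ ++ a :: l₂).filter p)
        = chainWeight ρ (a :: (l₂ ++ l₁ ++ [a]).filter p) := by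
          rw [List.filter_append, List.filter_cons_of_pos hpa, cycWeight_append_comm,
            List.cons_append, cycWeight_cons]
          simp [List.filter_append, hpa]
      _ ≤ chainWeight ρ (a :: (l₂ ++ l₁ ++ [a])) := chainWeight_cons_filter_le hnn htri p a _
      _ = cycWeight ρ (l₁ ++ a :: l₂) := by
          rw [cycWeight_append_comm, List.cons_append, cycWeight_cons]
          simp
  · rw [List.filter_eq_nil_iff.mpr (by simpa using h)]
    exact cycWeight_nonneg hnn l

end TriangleInequality

section Matchings

variable {V : Type*}

lemma matchVerts_toPairs : ∀ l : List V, Even l.length → matchVerts (toPairs l) = l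
  | [], _ => rfl
  | [_], h => by simp at h
  | a :: b :: t, h => by
    have ht : Even t.length := by simpa [Nat.even_add_one] using h
    rw [toPairs_cons_cons, matchVerts, List.flatMap_cons, ← matchVerts, matchVerts_toPairs t ht]
    rfl

lemma isPM_toPairs [DecidableEq V] {l : List V} (hl : l.Nodup) (he : Even l.length) :
    IsPM l.toFinset (toPairs l) := by
  rw [IsPM, matchVerts_toPairs l he]
  exact ⟨hl, rfl⟩

lemma chainWeight_eq_mWeight_toPairs_add (ρ : V → V → ℝ) :
    ∀ (a : V) (t : List V) (z : V), Odd t.length →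
      chainWeight ρ (a :: t ++ [z]) = mWeight ρ (toPairs (a :: t)) + mWeight ρ (toPairs (t ++ [z]))
  | _, [], _, h => by simp at h
  | a, [b], z, _ => by simp
  | a, b :: c :: t, z, h => by
    have ih := chainWeight_eq_mWeight_toPairs_add ρ c t z (by simpa [parity_simps] using h)
    simp only [List.cons_append, chainWeight_cons_cons, toPairs_cons_cons, mWeight_cons] at ih ⊢
    rw [ih]
    ring

lemma cycWeight_eq_mWeight_toPairs_add (ρ : V → V → ℝ) {l : List V} (he : Even l.length) :
    cycWeight ρ l = mWeight ρ (toPairs l) + mWeight ρ (toPairs (l.rotate 1)) := by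
  rcases l with _ | ⟨a, t⟩
  · simp [cycWeight]
  · rw [cycWeight_cons, List.rotate_cons_succ, List.rotate_zero,
      chainWeight_eq_mWeight_toPairs_add ρ a t a (by simpa [Nat.even_add_one] using he)]

lemma exists_isPM_mWeight_le_half_cycWeight [DecidableEq V] (ρ : V → V → ℝ) {l : List V}
    (hl : l.Nodup) (he : Even l.length) :
    ∃ M, IsPM l.toFinset M ∧ mWeight ρ M ≤ cycWeight ρ l / 2 := by
  have hsplit := cycWeight_eq_mWeight_toPairs_add ρ he
  rcases le_total (mWeight ρ (toPairs l)) (mWeight ρ (toPairs (l.rotate 1))) with h | h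
  · exact ⟨_, isPM_toPairs hl he, by linarith⟩
  · refine ⟨toPairs (l.rotate 1), ?_, by linarith⟩
    rw [← List.toFinset_eq_of_perm _ _ (l.rotate_perm 1)]
    exact isPM_toPairs (List.nodup_rotate.mpr hl) (by rwa [List.length_rotate])

end Matchings

theorem min_matching_on_odd_le_half_general {V : Type*} [Fintype V] [DecidableEq V]
    (ρ : V → V → ℝ) (hnn : ∀ i j, 0 ≤ ρ i j)
    (htri : ∀ i j k, ρ i j ≤ ρ i k + ρ k j)
    (T : SimpleGraph V)
    (L₀ : List V) (hL₀ : L₀.Nodup) (hL₀span : L₀.toFinset = Finset.univ) :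
    sInf {x | ∃ M : List (V × V),
        IsPM (Finset.univ.filter fun v => Odd (T.degree v)) M ∧ x = mWeight ρ M}
      ≤ cycWeight ρ L₀ / 2 := by
  set X₁ := Finset.univ.filter fun v => Odd (T.degree v)
  set l := L₀.filter (· ∈ X₁)
  have hl : l.Nodup := hL₀.filter _
  have hlX₁ : l.toFinset = X₁ := by
    ext v
    simp [l, hL₀span]
  have he : Even l.length := by
    rw [← List.toFinset_card_of_nodup hl, hlX₁]
    convert T.even_card_odd_degree_vertices
  obtain ⟨M, hM, hMl⟩ := exists_isPM_mWeight_le_half_cycWeight ρ hl he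
  calc _ ≤ mWeight ρ M := by
        refine csInf_le ⟨0, ?_⟩ ⟨M, hlX₁ ▸ hM, rfl⟩
        rintro _ ⟨M', -, rfl⟩
        exact mWeight_nonneg hnn M'
    _ ≤ cycWeight ρ l / 2 := hMl
    _ ≤ cycWeight ρ L₀ / 2 := by gcongr; exact cycWeight_filter_le hnn htri _ L₀

/-- The minimum weight of a perfect matching on the odd-degree vertices `X₁`
of a spanning tree is at most half the minimum Hamiltonian cycle weight, when
the edge weights satisfy the triangle inequality. -/
theorem min_matching_on_odd_le_half {V : Type*} [Fintype V] [DecidableEq V]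
    (ρ : V → V → ℝ) (hnn : ∀ i j, 0 ≤ ρ i j) (hsym : ∀ i j, ρ i j = ρ j i)
    (htri : ∀ i j k, ρ i j ≤ ρ i k + ρ k j) (hV : 3 ≤ Fintype.card V)
    (T : SimpleGraph V) (hT : T.IsTree)
    (hX : 2 ≤ (Finset.univ.filter fun v => Odd (T.degree v)).card)
    (L₀ : List V) (hL₀ : L₀.Nodup) (hL₀span : L₀.toFinset = Finset.univ)
    (hL₀min : ∀ L : List V, L.Nodup → L.toFinset = Finset.univ →
      cycWeight ρ L₀ ≤ cycWeight ρ L) :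
    sInf {x | ∃ M : List (V × V),
        IsPM (Finset.univ.filter fun v => Odd (T.degree v)) M ∧ x = mWeight ρ M}
      ≤ cycWeight ρ L₀ / 2 :=
  min_matching_on_odd_le_half_general ρ hnn htri T L₀ hL₀ hL₀span
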